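/- arXiv:2303.05859 — 2 statements merged into one kernel-verified Lean document; each statement's English description precedes it below -/
import Mathlib

section
/- Let D : [0,∞) → [0,∞) be continuous, and suppose there exist constants C ≥ 0 and λ > 0 such that the function t ↦ D(t) + C e^{-λ t} is nonincreasing on [0,∞), and D is integrable on [0,∞). Then t · D(t) → 0 as t → ∞. -/
open MeasureTheory Filter

theorem perturbed_monotone_integrable_decay
    (D : ℝ → ℝ) (C lam : ℝ) (hC : 0 ≤ C) (hlam : 0 < lam)
    (hD_cont : ContinuousOn D (Set.Ici 0))
    (hD_nonneg : ∀ t ≥ (0:ℝ), 0 ≤ D t)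
    (hmono : AntitoneOn (fun t => D t + C * Real.exp (-lam * t)) (Set.Ici 0))
    (hD_int : IntegrableOn D (Set.Ici 0)) :
    Tendsto (fun t => t * D t) atTop (nhds 0) := by
  set F : ℝ → ℝ := fun t => ∫ x in (0:ℝ)..t, D x with hF
  have hIoi : IntegrableOn D (Set.Ioi 0) := hD_int.mono_set Set.Ioi_subset_Ici_self
  have hFt : Tendsto F atTop (nhds (∫ x in Set.Ioi (0:ℝ), D x)) :=
    intervalIntegral_tendsto_integral_Ioi 0 hIoi tendsto_id
  have hhalf : Tendsto (fun t : ℝ => t / 2) atTop atTop :=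
    tendsto_id.atTop_div_const two_pos
  have hFt2 : Tendsto (fun t => F (t / 2)) atTop (nhds (∫ x in Set.Ioi (0:ℝ), D x)) :=
    hFt.comp hhalf
  have hdiff : Tendsto (fun t => F t - F (t / 2)) atTop (nhds 0) := by
    simpa using hFt.sub hFt2
  have hexp : Tendsto (fun t : ℝ => t * Real.exp (-(lam / 2) * t)) atTop (nhds 0) := by
    have hb : (0:ℝ) < lam / 2 := by positivity
    have h1 := (Real.tendsto_pow_mul_exp_neg_atTop_nhds_zero 1).comp
      (tendsto_id.const_mul_atTop hb : Tendsto (fun t : ℝ => lam / 2 * t) atTop atTop)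
    have h2 := h1.const_mul (2 / lam)
    simp only [Function.comp, pow_one, mul_zero] at h2
    refine h2.congr fun t => ?_
    field_simp
  have hg : Tendsto (fun t => 2 * (F t - F (t / 2)) + C * (t * Real.exp (-(lam / 2) * t)))
      atTop (nhds 0) := by
    have := (hdiff.const_mul 2).add (hexp.const_mul C)
    simpa using this
  refine squeeze_zero' ?_ ?_ hg
  · filter_upwards [eventually_ge_atTop (0:ℝ)] with t ht
    exact mul_nonneg ht (hD_nonneg t ht)
  · filter_upwards [eventually_ge_atTop (0:ℝ)] with t ht
    have ht2 : (0:ℝ) ≤ t / 2 := by linarith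
    have hII : IntervalIntegrable D volume (t / 2) t := by
      apply (hD_int.mono_set ?_).intervalIntegrable
      rw [Set.uIcc_of_le (by linarith)]
      exact fun x hx => le_trans ht2 hx.1
    have hII0t : IntervalIntegrable D volume 0 t := by
      apply (hD_int.mono_set ?_).intervalIntegrable
      rw [Set.uIcc_of_le ht]
      exact fun x hx => hx.1
    have hII0t2 : IntervalIntegrable D volume 0 (t / 2) := by
      apply (hD_int.mono_set ?_).intervalIntegrable
      rw [Set.uIcc_of_le ht2]
      exact fun x hx => hx.1
    have hconst : ∀ x ∈ Set.Icc (t / 2) t,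
        D t - C * Real.exp (-lam * (t / 2)) ≤ D x := by
      intro x hx
      have hx0 : (0:ℝ) ≤ x := le_trans ht2 hx.1
      have hm := hmono (Set.mem_Ici.mpr hx0) (Set.mem_Ici.mpr ht) hx.2
      simp only at hm
      have hle : Real.exp (-lam * x) ≤ Real.exp (-lam * (t / 2)) :=
        Real.exp_le_exp.mpr (by nlinarith [hx.1])
      have := mul_le_mul_of_nonneg_left hle hC
      nlinarith [Real.exp_pos (-lam * t), mul_nonneg hC (Real.exp_pos (-lam * t)).le]
    have hint : (t - t / 2) * (D t - C * Real.exp (-lam * (t / 2)))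
        ≤ ∫ x in (t / 2)..t, D x := by
      have h := intervalIntegral.integral_mono_on (by linarith : t / 2 ≤ t)
        (intervalIntegrable_const) hII hconst
      rw [intervalIntegral.integral_const, smul_eq_mul] at h
      exact h
    have hFsub : F t - F (t / 2) = ∫ x in (t / 2)..t, D x :=
      intervalIntegral.integral_interval_sub_left hII0t hII0t2
    have he : Real.exp (-(lam / 2) * t) = Real.exp (-lam * (t / 2)) := by ring_nf
    rw [he]
    nlinarith [hint, hFsub]
end

section
/- The quasi-stationary profile solves the first-order equation: with κ(y) = σ² + δ²/2 - y²/2 for |y| < δ and κ(y) = σ² for |y| ≥ δ, and f_q as the piecewise Gaussian/uniform profile centered at c, the function g(y) = κ(y) f_q(c + y) satisfies d/dy (κ(y) f_q(c+y)) + y f_q(c+y) = 0 for all y with |y| ≠ δ. -/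
open Filter Topology

lemma hasDerivAt_mul_sub_sq_div_two (a B y : ℝ) :
    HasDerivAt (fun z : ℝ => (a - z ^ 2 / 2) * B) (-(y * B)) y := by
  have h := (((hasDerivAt_pow 2 y).div_const 2).const_sub a).mul_const B
  exact h.congr_deriv (by ring)

lemma hasDerivAt_sq_mul_gaussian {s : ℝ} (hs : s ≠ 0) (A y : ℝ) :
    HasDerivAt (fun z : ℝ => s ^ 2 * (A * Real.exp (-z ^ 2 / (2 * s ^ 2))))
      (-(y * (A * Real.exp (-y ^ 2 / (2 * s ^ 2))))) y := by
  have hexponent : HasDerivAt (fun z : ℝ => -z ^ 2 / (2 * s ^ 2)) (-y / s ^ 2) y :=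
    ((hasDerivAt_pow 2 y).neg.div_const (2 * s ^ 2)).congr_deriv (by field_simp; ring)
  exact ((hexponent.exp.const_mul A).const_mul (s ^ 2)).congr_deriv (by field_simp)

theorem quasi_stationary_profile_solves_first_order_eq_general
    (σ δ m₁ m₂ c : ℝ) (hσ : 0 < σ)
    (κ : ℝ → ℝ)
    (hκ : ∀ y, κ y = if |y| < δ then σ^2 + δ^2/2 - y^2/2 else σ^2)
    (fq : ℝ → ℝ)
    (hfq : ∀ y, fq (c + y) =
      if |y| < δ then m₂ / (2 * δ)
      else (m₁ / Real.sqrt (2 * Real.pi * σ^2)) *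
        Real.exp (-y^2 / (2 * σ^2))) :
    ∀ y : ℝ, |y| ≠ δ →
      HasDerivAt (fun z => κ z * fq (c + z)) (-(y * fq (c + y))) y := by
  intro y hy
  rcases hy.lt_or_gt with hin | hout
  · have hloc : (fun z => κ z * fq (c + z)) =ᶠ[𝓝 y]
        fun z => (σ ^ 2 + δ ^ 2 / 2 - z ^ 2 / 2) * (m₂ / (2 * δ)) := by
      filter_upwards [continuous_abs.continuousAt.eventually_lt continuousAt_const hin] with z hz
      rw [hκ, hfq, if_pos hz, if_pos hz]
    rw [hfq, if_pos hin]
    exact (hasDerivAt_mul_sub_sq_div_two _ _ y).congr_of_eventuallyEq hloc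
  · have hloc : (fun z => κ z * fq (c + z)) =ᶠ[𝓝 y] fun z => σ ^ 2 *
        (m₁ / Real.sqrt (2 * Real.pi * σ ^ 2) * Real.exp (-z ^ 2 / (2 * σ ^ 2))) := by
      filter_upwards [continuousAt_const.eventually_lt continuous_abs.continuousAt hout]
        with z hz
      rw [hκ, hfq, if_neg hz.not_gt, if_neg hz.not_gt]
    rw [hfq, if_neg hout.not_gt]
    exact (hasDerivAt_sq_mul_gaussian hσ.ne' _ y).congr_of_eventuallyEq hloc

theorem quasi_stationary_profile_solves_first_order_eq
    (σ δ m₁ m₂ c : ℝ) (hσ : 0 < σ) (hδ : 0 < δ) (hm₁ : 0 < m₁) (hm₂ : 0 < m₂)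
    (κ : ℝ → ℝ)
    (hκ : ∀ y, κ y = if |y| < δ then σ^2 + δ^2/2 - y^2/2 else σ^2)
    (fq : ℝ → ℝ)
    (hfq : ∀ y, fq (c + y) =
      if |y| < δ then m₂ / (2 * δ)
      else (m₁ / Real.sqrt (2 * Real.pi * σ^2)) *
        Real.exp (-y^2 / (2 * σ^2))) :
    ∀ y : ℝ, |y| ≠ δ →
      HasDerivAt (fun z => κ z * fq (c + z)) (-(y * fq (c + y))) y :=
  quasi_stationary_profile_solves_first_order_eq_general σ δ m₁ m₂ c hσ κ hκ fq hfq
end
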